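/- Fix R > 0, c > 0, γ ∈ ℝ, and α0, β0 > 0, and consider the private-sampling game defined in the context. The profile with q0 = q1 = 1 and σ_D(p) = 1 for all p ∈ [0,1] is a pure-strategy equilibrium if and only if ((α0 + θ)/(α0 + β0 + 1) − γ)·R ≥ c for every θ ∈ {0,1}, equivalently if and only if (α0/(α0 + β0 + 1) − γ)·R ≥ c. -/

import Mathlib

open intervalIntegral

/-- The Beta function `B(a,b) = ∫_0^1 t^(a−1)(1−t)^(b−1) dt`. -/
noncomputable def betaFn (a b : ℝ) : ℝ :=
  ∫ t in (0:ℝ)..1, t ^ (a - 1) * (1 - t) ^ (b - 1)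

/-- The regularized incomplete Beta function
`I_x(a,b) = (∫_0^x t^(a−1)(1−t)^(b−1) dt) / B(a,b)`. -/
noncomputable def regIncBeta (x a b : ℝ) : ℝ :=
  (∫ t in (0:ℝ)..x, t ^ (a - 1) * (1 - t) ^ (b - 1)) / betaFn a b

/-- The attacker's posterior mean `m(θ) = (α0+θ)/(α0+β0+1)`. -/
noncomputable def postMean (α0 β0 θ : ℝ) : ℝ := (α0 + θ) / (α0 + β0 + 1)

/-- The attacker's conditional expectation of the defender's strategy,
`E_D(θ) = (∫_0^1 σ_D(p)·p^(α0+θ−1)(1−p)^(β0−θ) dp) / B(α0+θ, β0+1−θ)`. -/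
noncomputable def expDef (α0 β0 θ : ℝ) (σD : ℝ → ℝ) : ℝ :=
  (∫ p in (0:ℝ)..1, σD p * (p ^ (α0 + θ - 1) * (1 - p) ^ (β0 - θ)))
    / betaFn (α0 + θ) (β0 + 1 - θ)

/-- The attacker's (reduced) objective given sample `θ`:
`σ ↦ σ·((m(θ) − γ)R + c·(1 − 2E_D(θ)))`. -/
noncomputable def attackerObj (R c γ α0 β0 θ : ℝ) (σD : ℝ → ℝ) (σ : ℝ) : ℝ :=
  σ * ((postMean α0 β0 θ - γ) * R + c * (1 - 2 * expDef α0 β0 θ σD))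

/-- `(q0, q1, σ_D)` is a pure-strategy equilibrium of the private-sampling game:
all strategies are probabilities, `q_θ` maximizes the attacker's objective for each
sample `θ ∈ {0,1}`, and for every `p ∈ [0,1]` with `p ≠ 1/2`, `σ_D(p)` minimizes
the defender's objective `σ ↦ σ·(1 − 2((1−p)q0 + p·q1))`. -/
def IsPureEq (R c γ α0 β0 : ℝ) (q0 q1 : ℝ) (σD : ℝ → ℝ) : Prop :=
  q0 ∈ Set.Icc (0:ℝ) 1 ∧ q1 ∈ Set.Icc (0:ℝ) 1
    ∧ (∀ p ∈ Set.Icc (0:ℝ) 1, σD p ∈ Set.Icc (0:ℝ) 1)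
    ∧ (∀ σ ∈ Set.Icc (0:ℝ) 1,
        attackerObj R c γ α0 β0 0 σD σ ≤ attackerObj R c γ α0 β0 0 σD q0)
    ∧ (∀ σ ∈ Set.Icc (0:ℝ) 1,
        attackerObj R c γ α0 β0 1 σD σ ≤ attackerObj R c γ α0 β0 1 σD q1)
    ∧ (∀ p ∈ Set.Icc (0:ℝ) 1, p ≠ 1/2 → ∀ σ ∈ Set.Icc (0:ℝ) 1,
        σD p * (1 - 2 * ((1 - p) * q0 + p * q1))
          ≤ σ * (1 - 2 * ((1 - p) * q0 + p * q1)))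

/-! With `σ_D ≡ 1` the posterior expectation of the defence is `1`, so each sample's attacker
payoff is linear in `σ` with slope `(m(θ) − γ)R − c`; attacking for sure is optimal exactly when
that slope is nonnegative, the defender's slope is `−1`, and `m(0) ≤ m(1)`. -/

lemma intervalIntegrable_rpow_mul_one_sub_rpow {a b : ℝ} (ha : 0 < a) (hb : 0 < b) :
    IntervalIntegrable (fun t : ℝ => t ^ (a - 1) * (1 - t) ^ (b - 1)) MeasureTheory.volume 0 1 := by
  have left : IntervalIntegrable (fun t : ℝ => t ^ (a - 1) * (1 - t) ^ (b - 1))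
      MeasureTheory.volume 0 (1/2) := by
    refine (intervalIntegrable_rpow' (by linarith)).mul_continuousOn
      (ContinuousOn.rpow_const (by fun_prop) fun x hx => Or.inl ?_)
    rw [Set.uIcc_of_le (by norm_num)] at hx
    linarith [hx.2]
  have right : IntervalIntegrable (fun t : ℝ => t ^ (a - 1) * (1 - t) ^ (b - 1))
      MeasureTheory.volume (1/2) 1 := by
    have h :=
      (intervalIntegrable_rpow' (r := b - 1) (by linarith) (a := 0) (b := 1/2)).comp_sub_left 1
    norm_num at h
    refine h.symm.continuousOn_mul
      (ContinuousOn.rpow_const (by fun_prop) fun x hx => Or.inl ?_)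
    rw [Set.uIcc_of_le (by norm_num)] at hx
    linarith [hx.1]
  exact left.trans right

lemma betaFn_pos {a b : ℝ} (ha : 0 < a) (hb : 0 < b) : 0 < betaFn a b :=
  intervalIntegral_pos_of_pos_on (intervalIntegrable_rpow_mul_one_sub_rpow ha hb)
    (fun _ hx => mul_pos (Real.rpow_pos_of_pos hx.1 _)
      (Real.rpow_pos_of_pos (by linarith [hx.2]) _))
    zero_lt_one

lemma expDef_const {α0 β0 θ : ℝ} (ha : 0 < α0 + θ) (hb : 0 < β0 + 1 - θ) (k : ℝ) :
    expDef α0 β0 θ (fun _ => k) = k := by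
  have hB : betaFn (α0 + θ) (β0 + 1 - θ) =
      ∫ p in (0:ℝ)..1, p ^ (α0 + θ - 1) * (1 - p) ^ (β0 - θ) := by
    rw [betaFn, show β0 + 1 - θ - 1 = β0 - θ by ring]
  rw [expDef, integral_const_mul, ← hB, mul_div_assoc, div_self (betaFn_pos ha hb).ne', mul_one]

lemma attackerObj_const_one {R c γ α0 β0 θ : ℝ} (ha : 0 < α0 + θ) (hb : 0 < β0 + 1 - θ)
    (σ : ℝ) : attackerObj R c γ α0 β0 θ (fun _ => 1) σ = σ * ((postMean α0 β0 θ - γ) * R - c) := by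
  rw [attackerObj, expDef_const ha hb]
  ring

lemma one_maximizes_mul_iff (k : ℝ) : (∀ σ ∈ Set.Icc (0:ℝ) 1, σ * k ≤ 1 * k) ↔ 0 ≤ k := by
  refine ⟨fun h => by simpa using h 0 ⟨le_rfl, zero_le_one⟩, fun hk σ hσ => ?_⟩
  exact mul_le_mul_of_nonneg_right hσ.2 hk

lemma postMean_zero_le_one {α0 β0 : ℝ} (h : 0 < α0 + β0 + 1) :
    postMean α0 β0 0 ≤ postMean α0 β0 1 := by
  unfold postMean
  gcongr
  linarith

lemma one_maximizes_attackerObj_const_one_iff {R c γ α0 β0 θ : ℝ} (ha : 0 < α0 + θ)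
    (hb : 0 < β0 + 1 - θ) :
    (∀ σ ∈ Set.Icc (0:ℝ) 1,
        attackerObj R c γ α0 β0 θ (fun _ => 1) σ ≤ attackerObj R c γ α0 β0 θ (fun _ => 1) 1) ↔
      c ≤ (postMean α0 β0 θ - γ) * R := by
  simp only [attackerObj_const_one ha hb]
  rw [one_maximizes_mul_iff, sub_nonneg]

lemma isPureEq_one_one_const_one_iff {R c γ α0 β0 : ℝ} (hα : 0 < α0) (hβ : 0 < β0) :
    IsPureEq R c γ α0 β0 1 1 (fun _ => 1) ↔
      c ≤ (postMean α0 β0 0 - γ) * R ∧ c ≤ (postMean α0 β0 1 - γ) * R := by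
  have defender : ∀ p ∈ Set.Icc (0:ℝ) 1, p ≠ 1/2 → ∀ σ ∈ Set.Icc (0:ℝ) 1,
      (1:ℝ) * (1 - 2 * ((1 - p) * 1 + p * 1)) ≤ σ * (1 - 2 * ((1 - p) * 1 + p * 1)) :=
    fun p _ _ σ hσ => by nlinarith [hσ.2]
  have probability : (1:ℝ) ∈ Set.Icc (0:ℝ) 1 := ⟨zero_le_one, le_rfl⟩
  rw [IsPureEq, one_maximizes_attackerObj_const_one_iff (θ := 0) (by linarith) (by linarith),
    one_maximizes_attackerObj_const_one_iff (θ := 1) (by linarith) (by linarith)]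
  exact ⟨fun h => ⟨h.2.2.2.1, h.2.2.2.2.1⟩,
    fun h => ⟨probability, probability, fun _ _ => probability, h.1, h.2, defender⟩⟩

theorem region_one_general (R c γ α0 β0 : ℝ)
    (hR : 0 < R) (hα : 0 < α0) (hβ : 0 < β0) :
    (IsPureEq R c γ α0 β0 1 1 (fun _ => 1)
      ↔ ∀ θ ∈ ({0, 1} : Set ℝ), ((α0 + θ) / (α0 + β0 + 1) - γ) * R ≥ c)
    ∧ ((∀ θ ∈ ({0, 1} : Set ℝ), ((α0 + θ) / (α0 + β0 + 1) - γ) * R ≥ c)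
      ↔ (α0 / (α0 + β0 + 1) - γ) * R ≥ c) := by
  have forall_pair : (∀ θ ∈ ({0, 1} : Set ℝ), ((α0 + θ) / (α0 + β0 + 1) - γ) * R ≥ c) ↔
      c ≤ (postMean α0 β0 0 - γ) * R ∧ c ≤ (postMean α0 β0 1 - γ) * R := by
    simp only [Set.mem_insert_iff, Set.mem_singleton_iff, forall_eq_or_imp, forall_eq, ge_iff_le,
      postMean]
  have hmono : (postMean α0 β0 0 - γ) * R ≤ (postMean α0 β0 1 - γ) * R := by
    gcongr
    exact postMean_zero_le_one (by linarith)
  refine ⟨(isPureEq_one_one_const_one_iff hα hβ).trans forall_pair.symm,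
    forall_pair.trans ((and_iff_left_of_imp fun h => h.trans hmono).trans ?_)⟩
  rw [postMean, add_zero, ge_iff_le]

/-- region 1 of Lemma 2: both players choosing target `a`
(`q0 = q1 = 1`, `σ_D ≡ 1`) is a pure-strategy equilibrium iff
`((α0+θ)/(α0+β0+1) − γ)R ≥ c` for every `θ ∈ {0,1}`, equivalently iff
`(α0/(α0+β0+1) − γ)R ≥ c`. -/
theorem region_one (R c γ α0 β0 : ℝ)
    (hR : 0 < R) (hc : 0 < c) (hα : 0 < α0) (hβ : 0 < β0) :
    (IsPureEq R c γ α0 β0 1 1 (fun _ => 1)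
      ↔ ∀ θ ∈ ({0, 1} : Set ℝ), ((α0 + θ) / (α0 + β0 + 1) - γ) * R ≥ c)
    ∧ ((∀ θ ∈ ({0, 1} : Set ℝ), ((α0 + θ) / (α0 + β0 + 1) - γ) * R ≥ c)
      ↔ (α0 / (α0 + β0 + 1) - γ) * R ≥ c) :=
  region_one_general R c γ α0 β0 hR hα hβ
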